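/- arXiv:1501.06866 — 3 statements merged into one kernel-verified Lean document; each statement's English description precedes it below -/
import Mathlib

section
/- For all natural numbers k, l, m ≥ 1, the matrix B'(k,l,m) = [[k(l-1)+1, k(l(m-1)+m), 2k-1],[l-1, l(m-1)+1, 1],[0, m-1, 1]] maps the cone K' = {w ∈ ℝ³ : w₁,w₂,w₃ > 0, w₃ < w₁+w₂} into itself. -/
open Matrix

/-- The matrix `B'(k,l,m)` from the paper, over the reals. -/
def Bp (k l m : ℕ) : Matrix (Fin 3) (Fin 3) ℝ :=
  !![(k : ℝ) * ((l : ℝ) - 1) + 1, (k : ℝ) * ((l : ℝ) * ((m : ℝ) - 1) + (m : ℝ)), 2 * (k : ℝ) - 1;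
     (l : ℝ) - 1, (l : ℝ) * ((m : ℝ) - 1) + 1, 1;
     0, (m : ℝ) - 1, 1]

theorem stmt2 (k l m : ℕ) (hk : 1 ≤ k) (hl : 1 ≤ l) (hm : 1 ≤ m)
    (w : Fin 3 → ℝ) (hw : ∀ i, 0 < w i) (htri : w 2 < w 0 + w 1) :
    (∀ i, 0 < (Bp k l m).mulVec w i) ∧
      (Bp k l m).mulVec w 2 < (Bp k l m).mulVec w 0 + (Bp k l m).mulVec w 1 := by
  have hK : (1 : ℝ) ≤ (k : ℝ) := by exact_mod_cast hk
  have hL : (1 : ℝ) ≤ (l : ℝ) := by exact_mod_cast hl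
  have hM : (1 : ℝ) ≤ (m : ℝ) := by exact_mod_cast hm
  have h0 := hw 0
  have h1 := hw 1
  have h2 := hw 2
  constructor
  · intro i
    fin_cases i <;>
      simp [Bp, mulVec, dotProduct, Fin.sum_univ_three] <;>
      nlinarith [mul_nonneg (mul_nonneg (by linarith : (0:ℝ) ≤ (k:ℝ)) (by linarith : (0:ℝ) ≤ (l:ℝ) - 1)) h0.le,
        mul_nonneg (mul_nonneg (by linarith : (0:ℝ) ≤ (k:ℝ)) (by nlinarith : (0:ℝ) ≤ (l:ℝ) * ((m:ℝ) - 1) + (m:ℝ))) h1.le,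
        mul_nonneg (by linarith : (0:ℝ) ≤ 2 * (k:ℝ) - 2) h2.le,
        mul_nonneg (by linarith : (0:ℝ) ≤ (l:ℝ) - 1) h0.le,
        mul_nonneg (mul_nonneg (by linarith : (0:ℝ) ≤ (l:ℝ)) (by linarith : (0:ℝ) ≤ (m:ℝ) - 1)) h1.le,
        mul_nonneg (by linarith : (0:ℝ) ≤ (m:ℝ) - 1) h1.le]
  · simp [Bp, mulVec, dotProduct, Fin.sum_univ_three]
    nlinarith [mul_nonneg (mul_nonneg (by linarith : (0:ℝ) ≤ (k:ℝ)) (by linarith : (0:ℝ) ≤ (l:ℝ) - 1)) h0.le,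
      mul_nonneg (mul_nonneg (by linarith : (0:ℝ) ≤ (k:ℝ) - 1) (by nlinarith : (0:ℝ) ≤ (l:ℝ) * ((m:ℝ) - 1) + (m:ℝ))) h1.le,
      mul_nonneg (mul_nonneg (by linarith : (0:ℝ) ≤ (l:ℝ)) (by linarith : (0:ℝ) ≤ (m:ℝ) - 1)) h1.le,
      mul_nonneg (by linarith : (0:ℝ) ≤ (l:ℝ) - 1) h0.le,
      mul_nonneg (by linarith : (0:ℝ) ≤ 2 * (k:ℝ) - 2) h2.le]
end

section
/- For any infinite sequence k₀, k₁, k₂, … of positive natural numbers, there exists a sequence of vectors w₀, w₁, w₂, … in the open positive cone ℝ₊³ satisfying wᵢ = B(kᵢ)·wᵢ₊₁ for all i ≥ 0, and any two such sequences agree up to multiplication by a single positive scalar. -/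
/-!
Writing `w i = (a i, a (i + 1), a (i + 2))`, the equation `w i = B(k i) w (i + 1)` becomes the
recurrence `a n = k n (a (n + 1) + a (n + 2)) + a (n + 3)`.

Existence: the backward solutions that are `1` from `N` on, normalised by `a 0 = 1`, are antitone
and lie in `[0, 1]^ℕ`; by Tychonoff a subsequence converges, and the limit is an antitone solution
with `a 0 = 1`, hence positive.

Uniqueness: for positive solutions `a`, `u` the ratio `c = u / a` is at every `n` a weighted
average of `c (n + 1)`, `c (n + 2)`, `c (n + 3)`, and the weights make
`|c n - c (n + 1)| ≤ 5/6 · max |c (n + 1) - c (n + 2)| |c (n + 2) - c (n + 3)|`. The averaging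
also makes the minimum of `c` over `{n, n + 1, n + 2}` antitone in `n`, which together with
`c n ≤ 3 c (n + 1)` gives `c n ≤ 9 c 0`. So the supremum `D` of the differences is finite with
`D ≤ 5/6 · D`, and `c` is constant.
-/

open Matrix

/-- The matrix `B(k)` from the paper, over the reals. -/
def Bmat (k : ℕ) : Matrix (Fin 3) (Fin 3) ℝ := !![(k : ℝ), (k : ℝ), 1; 1, 0, 0; 0, 1, 0]

open Filter

lemma eq_zero_of_le_mul_max {x : ℕ → ℝ} {θ : ℝ} (hθ₀ : 0 ≤ θ) (hθ₁ : θ < 1)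
    (hx₀ : ∀ n, 0 ≤ x n) (hbdd : BddAbove (Set.range x))
    (hx : ∀ n, x n ≤ θ * max (x (n + 1)) (x (n + 2))) (n : ℕ) : x n = 0 := by
  have hle : ∀ n, x n ≤ ⨆ m, x m := le_ciSup hbdd
  have hsup : (⨆ m, x m) ≤ θ * ⨆ m, x m :=
    ciSup_le fun n => (hx n).trans (by gcongr; exact max_le (hle _) (hle _))
  have hsup₀ : 0 ≤ ⨆ m, x m := (hx₀ 0).trans (hle 0)
  have : (⨆ m, x m) ≤ 0 := by nlinarith
  exact le_antisymm ((hle n).trans this) (hx₀ n)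

def IsRecSolution (k a : ℕ → ℝ) : Prop :=
  ∀ n, a n = k n * (a (n + 1) + a (n + 2)) + a (n + 3)

namespace IsRecSolution

variable {k a u : ℕ → ℝ}

lemma pos_of_antitone (hk : ∀ n, 0 ≤ k n) (ha : IsRecSolution k a) (hanti : Antitone a)
    (h₀ : 0 < a 0) (n : ℕ) : 0 < a n := by
  induction n with
  | zero => exact h₀
  | succ n ih =>
    by_contra! h
    have h₂ : a (n + 2) ≤ a (n + 1) := hanti (by omega)
    have h₃ : a (n + 3) ≤ a (n + 1) := hanti (by omega)
    have := mul_nonpos_of_nonneg_of_nonpos (hk n) (by linarith : a (n + 1) + a (n + 2) ≤ 0)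
    linarith [ha n]

lemma add_add_le (hk : ∀ n, 1 ≤ k n) (ha : IsRecSolution k a) (hpos : ∀ n, 0 < a n) (n : ℕ) :
    a (n + 1) + a (n + 2) + a (n + 3) ≤ a n := by
  nlinarith [ha n, hk n, hpos (n + 1), hpos (n + 2)]

lemma mul_succ_le (hk : ∀ n, 1 ≤ k n) (ha : IsRecSolution k a) (hpos : ∀ n, 0 < a n) (n : ℕ) :
    k n * a (n + 1) ≤ a n := by
  nlinarith [ha n, hk n, hpos (n + 2), hpos (n + 3)]

lemma le_three_mul_succ (hk : ∀ n, 1 ≤ k n) (ha : IsRecSolution k a) (hpos : ∀ n, 0 < a n)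
    (n : ℕ) : a n ≤ 3 * k n * a (n + 1) := by
  have : a (n + 2) + a (n + 3) + a (n + 4) ≤ a (n + 1) := add_add_le hk ha hpos (n + 1)
  nlinarith [ha n, hk n, hpos (n + 2), hpos (n + 3), hpos (n + 4)]

lemma weights_le (hk : ∀ n, 1 ≤ k n) (ha : IsRecSolution k a) (hpos : ∀ n, 0 < a n) (n : ℕ) :
    6 * (k n * a (n + 2) + 2 * a (n + 3)) ≤ 5 * a n := by
  have h₁ : a (n + 2) + a (n + 3) + a (n + 4) ≤ a (n + 1) := add_add_le hk ha hpos (n + 1)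
  have h₂ : a (n + 3) + a (n + 4) + a (n + 5) ≤ a (n + 2) := add_add_le hk ha hpos (n + 2)
  have := hpos (n + 3); have := hpos (n + 4); have := hpos (n + 5)
  nlinarith [ha n, mul_le_mul_of_nonneg_left (by linarith : a (n + 2) ≤ a (n + 1))
    (zero_le_one.trans (hk n)), mul_le_mul_of_nonneg_right (hk n) (hpos (n + 1)).le]

lemma div_le_three_mul_div (hk : ∀ n, 1 ≤ k n) (ha : IsRecSolution k a)
    (hu : IsRecSolution k u) (hposa : ∀ n, 0 < a n) (hposu : ∀ n, 0 < u n) (n : ℕ) :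
    (u / a) n ≤ 3 * (u / a) (n + 1) := by
  have h₁ := le_three_mul_succ hk hu hposu n
  have h₂ := mul_succ_le hk ha hposa n
  simp only [Pi.div_apply]
  rw [div_le_iff₀ (hposa n), mul_div_assoc', div_mul_eq_mul_div, le_div_iff₀ (hposa (n + 1))]
  nlinarith [mul_le_mul_of_nonneg_right h₁ (hposa (n + 1)).le,
    mul_le_mul_of_nonneg_left h₂ (by linarith [hposu (n + 1)] : 0 ≤ 3 * u (n + 1))]

lemma min_le_div (hk : ∀ n, 0 ≤ k n) (ha : IsRecSolution k a) (hu : IsRecSolution k u)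
    (hposa : ∀ n, 0 < a n) (n : ℕ) :
    min ((u / a) (n + 1)) (min ((u / a) (n + 2)) ((u / a) (n + 3))) ≤ (u / a) n := by
  set μ := min ((u / a) (n + 1)) (min ((u / a) (n + 2)) ((u / a) (n + 3)))
  have h₁ : μ * a (n + 1) ≤ u (n + 1) := (le_div_iff₀ (hposa _)).1 (min_le_left _ _)
  have h₂ : μ * a (n + 2) ≤ u (n + 2) :=
    (le_div_iff₀ (hposa _)).1 ((min_le_right _ _).trans (min_le_left _ _))
  have h₃ : μ * a (n + 3) ≤ u (n + 3) :=
    (le_div_iff₀ (hposa _)).1 ((min_le_right _ _).trans (min_le_right _ _))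
  rw [Pi.div_apply, le_div_iff₀ (hposa n), ha n, hu n]
  nlinarith [mul_le_mul_of_nonneg_left h₁ (hk n), mul_le_mul_of_nonneg_left h₂ (hk n)]

lemma div_le_nine_mul_div (hk : ∀ n, 1 ≤ k n) (ha : IsRecSolution k a)
    (hu : IsRecSolution k u) (hposa : ∀ n, 0 < a n) (hposu : ∀ n, 0 < u n) (n : ℕ) :
    (u / a) n ≤ 9 * (u / a) 0 := by
  have hup := div_le_three_mul_div hk ha hu hposa hposu
  set c := u / a
  have hc : ∀ n, 0 < c n := fun n => div_pos (hposu n) (hposa n)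
  set m : ℕ → ℝ := fun n => min (c n) (min (c (n + 1)) (c (n + 2)))
  have hm : Antitone m := antitone_nat_of_succ_le fun n =>
    le_min (min_le_div (fun n => zero_le_one.trans (hk n)) ha hu hposa n)
      (le_min (min_le_left _ _) ((min_le_right _ _).trans (min_le_left _ _)))
  calc c n ≤ 9 * m n := by
        simp only [m, mul_min_of_nonneg _ _ (by norm_num : (0 : ℝ) ≤ 9)]
        refine le_min (by linarith [hc n]) (le_min (by linarith [hup n, hc (n + 1)]) ?_)
        linarith [hup n, hup (n + 1), hc (n + 2)]
    _ ≤ 9 * m 0 := by gcongr; exact hm (Nat.zero_le n)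
    _ ≤ 9 * c 0 := by gcongr; exact min_le_left _ _

/-- `u n = k n * a (n + 1) * c (n + 1) + k n * a (n + 2) * c (n + 2) + a (n + 3) * c (n + 3)` for
`c = u / a`, so `c n` is a weighted average of the next three values of `c`. -/
lemma mul_div_sub_div (ha : IsRecSolution k a) (hu : IsRecSolution k u) (hposa : ∀ n, 0 < a n)
    (n : ℕ) :
    a n * ((u / a) n - (u / a) (n + 1)) =
      -((k n * a (n + 2) + a (n + 3)) * ((u / a) (n + 1) - (u / a) (n + 2)) +
        a (n + 3) * ((u / a) (n + 2) - (u / a) (n + 3))) := by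
  have := (hposa n).ne'; have := (hposa (n + 1)).ne'
  have := (hposa (n + 2)).ne'; have := (hposa (n + 3)).ne'
  simp only [Pi.div_apply]
  field_simp
  rw [hu n, ha n]
  ring

lemma abs_div_sub_div_le (hk : ∀ n, 1 ≤ k n) (ha : IsRecSolution k a) (hu : IsRecSolution k u)
    (hposa : ∀ n, 0 < a n) (n : ℕ) :
    |(u / a) n - (u / a) (n + 1)| ≤
      5 / 6 * max |(u / a) (n + 1) - (u / a) (n + 2)| |(u / a) (n + 2) - (u / a) (n + 3)| := by
  have hid := mul_div_sub_div ha hu hposa n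
  set c := u / a
  set M := max |c (n + 1) - c (n + 2)| |c (n + 2) - c (n + 3)|
  have hM₀ : 0 ≤ M := (abs_nonneg _).trans (le_max_left _ _)
  have hw := weights_le hk ha hposa n
  have hβ : 0 ≤ k n * a (n + 2) + a (n + 3) := by
    nlinarith [hk n, hposa (n + 2), hposa (n + 3)]
  have hγ : 0 ≤ a (n + 3) := (hposa _).le
  refine le_of_mul_le_mul_left ?_ (hposa n)
  calc a n * |c n - c (n + 1)| = |a n * (c n - c (n + 1))| := by
        rw [abs_mul, abs_of_pos (hposa n)]
    _ = |(k n * a (n + 2) + a (n + 3)) * (c (n + 1) - c (n + 2)) +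
          a (n + 3) * (c (n + 2) - c (n + 3))| := by
        rw [hid, abs_neg]
    _ ≤ (k n * a (n + 2) + a (n + 3)) * M + a (n + 3) * M := by
        refine (abs_add_le _ _).trans (add_le_add ?_ ?_) <;> rw [abs_mul, abs_of_nonneg ‹_›]
        · exact mul_le_mul_of_nonneg_left (le_max_left _ _) hβ
        · exact mul_le_mul_of_nonneg_left (le_max_right _ _) hγ
    _ ≤ a n * (5 / 6 * M) := by nlinarith [mul_le_mul_of_nonneg_right hw hM₀]

theorem eq_smul (hk : ∀ n, 1 ≤ k n) (ha : IsRecSolution k a) (hu : IsRecSolution k u)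
    (hposa : ∀ n, 0 < a n) (hposu : ∀ n, 0 < u n) : ∃ c : ℝ, 0 < c ∧ u = c • a := by
  set c := u / a
  have hc : ∀ n, 0 < c n := fun n => div_pos (hposu n) (hposa n)
  have hbdd : BddAbove (Set.range fun n => |c n - c (n + 1)|) := by
    refine ⟨9 * c 0, Set.forall_mem_range.2 fun n => abs_sub_le_of_nonneg_of_le (hc n).le ?_
      (hc _).le ?_⟩ <;> exact div_le_nine_mul_div hk ha hu hposa hposu _
  have hstep : ∀ n, c (n + 1) = c n := fun n => by
    have := eq_zero_of_le_mul_max (by norm_num) (by norm_num) (fun n => abs_nonneg _) hbdd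
      (abs_div_sub_div_le hk ha hu hposa) n
    linarith [abs_eq_zero.1 this]
  have hconst : ∀ n, c n = c 0 := fun n => by
    induction n with
    | zero => rfl
    | succ n ih => rw [hstep, ih]
  refine ⟨c 0, hc 0, funext fun n => ?_⟩
  rw [Pi.smul_apply, smul_eq_mul, ← hconst n]
  exact (div_mul_cancel₀ (u n) (hposa n).ne').symm

end IsRecSolution

noncomputable def truncSol (k : ℕ → ℝ) (N : ℕ) : ℕ → ℝ := fun n =>
  if N ≤ n then 1 else k n * (truncSol k N (n + 1) + truncSol k N (n + 2)) + truncSol k N (n + 3)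
termination_by n => N - n

namespace truncSol

variable {k : ℕ → ℝ} {N n : ℕ}

lemma of_le (h : N ≤ n) : truncSol k N n = 1 := by
  rw [truncSol, if_pos h]

lemma of_lt (h : n < N) :
    truncSol k N n =
      k n * (truncSol k N (n + 1) + truncSol k N (n + 2)) + truncSol k N (n + 3) := by
  rw [truncSol, if_neg (not_le.2 h)]

lemma one_le (hk : ∀ n, 0 ≤ k n) (N n : ℕ) : 1 ≤ truncSol k N n := by
  rcases le_or_gt N n with h | h
  · rw [of_le h]
  · have := one_le hk N (n + 1); have := one_le hk N (n + 2); have := one_le hk N (n + 3)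
    rw [of_lt h]
    nlinarith [hk n]
termination_by N - n

lemma antitone (hk : ∀ n, 1 ≤ k n) (N : ℕ) : Antitone (truncSol k N) := by
  refine antitone_nat_of_succ_le fun n => ?_
  rcases le_or_gt N n with h | h
  · rw [of_le h, of_le (by omega)]
  · have hk₀ n := zero_le_one.trans (hk n)
    have := one_le hk₀ N (n + 1); have := one_le hk₀ N (n + 2); have := one_le hk₀ N (n + 3)
    rw [of_lt h]
    nlinarith [hk n]

end truncSol

theorem exists_pos_isRecSolution {k : ℕ → ℝ} (hk : ∀ n, 1 ≤ k n) :
    ∃ a, IsRecSolution k a ∧ ∀ n, 0 < a n := by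
  have hk₀ n := zero_le_one.trans (hk n)
  set A : ℕ → ℕ → ℝ := fun N n => truncSol k N n / truncSol k N 0
  have hb₀ N : 0 < truncSol k N 0 := zero_lt_one.trans_le (truncSol.one_le hk₀ N 0)
  have hanti N : Antitone (A N) := fun _ _ h =>
    div_le_div_of_nonneg_right (truncSol.antitone hk N h) (hb₀ N).le
  have hmem N : A N ∈ Set.univ.pi fun _ => Set.Icc (0 : ℝ) 1 := fun n _ =>
    ⟨div_nonneg (zero_le_one.trans (truncSol.one_le hk₀ N n)) (hb₀ N).le,
      div_le_one_of_le₀ (truncSol.antitone hk N (Nat.zero_le n)) (hb₀ N).le⟩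
  obtain ⟨a, -, φ, hφ, hlim⟩ := (isCompact_univ_pi fun _ => isCompact_Icc).tendsto_subseq hmem
  have hrec : IsRecSolution k a := fun n => by
    refine (isClosed_eq (continuous_apply n) (by fun_prop : Continuous fun x : ℕ → ℝ =>
      k n * (x (n + 1) + x (n + 2)) + x (n + 3))).mem_of_tendsto hlim ?_
    filter_upwards [hφ.tendsto_atTop.eventually_gt_atTop n] with j hj
    simp only [Function.comp_apply, A, truncSol.of_lt hj]
    ring
  have hanti_lim : Antitone a := antitone_nat_of_succ_le fun n => by
    refine (isClosed_le (continuous_apply (n + 1)) (continuous_apply n)).mem_of_tendsto hlim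
      (Eventually.of_forall fun j => ?_)
    exact hanti (φ j) n.le_succ
  have ha₀ : a 0 = 1 := by
    refine (isClosed_eq (continuous_apply 0) continuous_const).mem_of_tendsto hlim
      (Eventually.of_forall fun j => ?_)
    exact div_self (hb₀ (φ j)).ne'
  exact ⟨a, hrec, hrec.pos_of_antitone hk₀ hanti_lim (ha₀ ▸ one_pos)⟩

lemma Bmat_mulVec (κ : ℕ) (v : Fin 3 → ℝ) :
    (Bmat κ).mulVec v = ![κ * (v 0 + v 1) + v 2, v 0, v 1] := by
  funext j
  fin_cases j <;> simp [Bmat, mulVec, dotProduct, Fin.sum_univ_three, mul_add]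

section Orbit

variable {k : ℕ → ℕ} {w : ℕ → Fin 3 → ℝ}

lemma apply_eq_apply_zero (hw : ∀ i, w i = (Bmat (k i)).mulVec (w (i + 1))) (i : ℕ) (j : Fin 3) :
    w i j = w (i + j) 0 := by
  have h₁ : w i 1 = w (i + 1) 0 := by simpa [Bmat_mulVec] using congrFun (hw i) 1
  have h₂ : w i 2 = w (i + 1) 1 := by simpa [Bmat_mulVec] using congrFun (hw i) 2
  have h₃ : w (i + 1) 1 = w (i + 2) 0 := by simpa [Bmat_mulVec] using congrFun (hw (i + 1)) 1
  fin_cases j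
  · rfl
  · exact h₁
  · exact h₂.trans h₃

lemma isRecSolution_of_mulVec (hw : ∀ i, w i = (Bmat (k i)).mulVec (w (i + 1))) :
    IsRecSolution (fun n => k n) (fun n => w n 0) := fun n => by
  have h := congrFun (hw n) 0
  rw [Bmat_mulVec, apply_eq_apply_zero hw (n + 1) 1, apply_eq_apply_zero hw (n + 1) 2] at h
  simpa using h

lemma mulVec_of_isRecSolution {a : ℕ → ℝ} (ha : IsRecSolution (fun n => k n) a) (i : ℕ) :
    (fun j : Fin 3 => a (i + j)) = (Bmat (k i)).mulVec fun j => a (i + 1 + j) := by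
  rw [Bmat_mulVec]
  funext j
  fin_cases j
  · simpa [add_assoc] using ha i
  · simp
  · simp [add_assoc]

end Orbit

theorem stmt4 (k : ℕ → ℕ) (hk : ∀ i, 1 ≤ k i) :
    (∃ w : ℕ → Fin 3 → ℝ, (∀ i j, 0 < w i j) ∧ ∀ i, w i = (Bmat (k i)).mulVec (w (i + 1))) ∧
    (∀ w w' : ℕ → Fin 3 → ℝ,
      (∀ i j, 0 < w i j) → (∀ i, w i = (Bmat (k i)).mulVec (w (i + 1))) →
      (∀ i j, 0 < w' i j) → (∀ i, w' i = (Bmat (k i)).mulVec (w' (i + 1))) →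
      ∃ c : ℝ, 0 < c ∧ ∀ i, w' i = c • w i) := by
  have hk' : ∀ n, 1 ≤ (k n : ℝ) := fun n => by exact_mod_cast hk n
  refine ⟨?_, fun w w' hw hrel hw' hrel' => ?_⟩
  · obtain ⟨a, ha, hpos⟩ := exists_pos_isRecSolution hk'
    exact ⟨fun i j => a (i + j), fun i j => hpos _, mulVec_of_isRecSolution ha⟩
  · obtain ⟨c, hc, hwc⟩ := (isRecSolution_of_mulVec hrel).eq_smul hk'
      (isRecSolution_of_mulVec hrel') (fun n => hw n 0) (fun n => hw' n 0)
    refine ⟨c, hc, fun i => funext fun j => ?_⟩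
    rw [Pi.smul_apply, apply_eq_apply_zero hrel', apply_eq_apply_zero hrel]
    exact congrFun hwc (i + j)
end

section
/- If (kᵢ) is a sequence of positive naturals and (wᵢ) ⊂ ℝ₊³ satisfies wᵢ = B(kᵢ)·wᵢ₊₁ for all i, and kᵢ → ∞, then w₂ᵢ/w₁ᵢ → 0 and w₃ᵢ/w₁ᵢ → 0 as i → ∞. -/
open Matrix Filter

/-
Reading off the rows of `B(kᵢ)`: `w₂ᵢ = w₁,ᵢ₊₁`, `w₃ᵢ = w₂,ᵢ₊₁`, and by positivity
`w₁ᵢ ≥ kᵢ · w₁,ᵢ₊₁` and `w₁ᵢ ≥ kᵢ · w₂,ᵢ₊₁`. Hence both ratios are at most `1 / kᵢ → 0`.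
-/

section Bmat

variable (k : ℕ) (v : Fin 3 → ℝ)

theorem Bmat_mulVec_zero : (Bmat k *ᵥ v) 0 = k * (v 0 + v 1) + v 2 := by
  simp only [Bmat, mulVec, dotProduct, Fin.sum_univ_three, of_apply, cons_val', cons_val_zero,
    cons_val_one, cons_val, cons_val_fin_one]
  ring

theorem Bmat_mulVec_one : (Bmat k *ᵥ v) 1 = v 0 := by
  simp [Bmat, mulVec, dotProduct, Fin.sum_univ_three]

theorem Bmat_mulVec_two : (Bmat k *ᵥ v) 2 = v 1 := by
  simp [Bmat, mulVec, dotProduct, Fin.sum_univ_three]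

variable {v}

theorem natCast_mul_apply_zero_le_Bmat_mulVec_zero (hv : ∀ j, 0 ≤ v j) :
    k * v 0 ≤ (Bmat k *ᵥ v) 0 := by
  rw [Bmat_mulVec_zero]
  have := mul_nonneg k.cast_nonneg (hv 1)
  linarith [hv 2]

theorem natCast_mul_apply_one_le_Bmat_mulVec_zero (hv : ∀ j, 0 ≤ v j) :
    k * v 1 ≤ (Bmat k *ᵥ v) 0 := by
  rw [Bmat_mulVec_zero]
  have := mul_nonneg k.cast_nonneg (hv 0)
  linarith [hv 2]

end Bmat

theorem tendsto_div_of_mul_le {ι : Type*} {l : Filter ι} {a b c : ι → ℝ}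
    (ha : ∀ i, 0 ≤ a i) (hab : ∀ i, c i * a i ≤ b i) (hc : Tendsto c l atTop) :
    Tendsto (fun i => a i / b i) l (nhds 0) := by
  have hcpos := hc.eventually_gt_atTop 0
  have hb : ∀ i, 0 < c i → 0 ≤ b i := fun i hci => (mul_nonneg hci.le (ha i)).trans (hab i)
  refine squeeze_zero' (hcpos.mono fun i hci => div_nonneg (ha i) (hb i hci))
    (hcpos.mono fun i hci => ?_) hc.inv_tendsto_atTop
  exact div_le_of_le_mul₀ (hb i hci) (inv_nonneg.2 hci.le) ((le_inv_mul_iff₀ hci).2 (hab i))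

theorem stmt19_general (k : ℕ → ℕ) (hkinf : Tendsto k atTop atTop)
    (w : ℕ → Fin 3 → ℝ) (hw : ∀ i j, 0 < w i j)
    (hrec : ∀ i, w i = (Bmat (k i)).mulVec (w (i + 1))) :
    Tendsto (fun i => w i 1 / w i 0) atTop (nhds 0) ∧
      Tendsto (fun i => w i 2 / w i 0) atTop (nhds 0) := by
  have hkR : Tendsto (fun i => (k i : ℝ)) atTop atTop := tendsto_natCast_atTop_atTop.comp hkinf
  constructor
  · refine tendsto_div_of_mul_le (fun i => (hw i 1).le) (fun i => ?_) hkR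
    rw [hrec i, Bmat_mulVec_one]
    exact natCast_mul_apply_zero_le_Bmat_mulVec_zero _ fun j => (hw (i + 1) j).le
  · refine tendsto_div_of_mul_le (fun i => (hw i 2).le) (fun i => ?_) hkR
    rw [hrec i, Bmat_mulVec_two]
    exact natCast_mul_apply_one_le_Bmat_mulVec_zero _ fun j => (hw (i + 1) j).le

theorem stmt19 (k : ℕ → ℕ) (hk : ∀ i, 1 ≤ k i) (hkinf : Tendsto k atTop atTop)
    (w : ℕ → Fin 3 → ℝ) (hw : ∀ i j, 0 < w i j)
    (hrec : ∀ i, w i = (Bmat (k i)).mulVec (w (i + 1))) :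
    Tendsto (fun i => w i 1 / w i 0) atTop (nhds 0) ∧
      Tendsto (fun i => w i 2 / w i 0) atTop (nhds 0) :=
  stmt19_general k hkinf w hw hrec
end
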